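/- Let Φ : ℝ^N → Set(ℝ^N) be a monotone set-valued map, let Q, M be real N×N matrices with M invertible such that H := Q M⁻¹ is symmetric positive definite and D := Qᵀ + Q − Mᵀ H M is symmetric positive definite. Let sequences (ξ^k), (ξ̂^k), (V^k) in ℝ^N satisfy, for every k ≥ 0, Q(ξ^k − ξ̂^k) + V^k ∈ Φ(ξ̂^k) and ξ^{k+1} = ξ^k − M(ξ^k − ξ̂^k), with Σ_{k=0}^∞ ‖V^k‖ < ∞. If there exists ξ* with 0 ∈ Φ(ξ*), then the sequence (ξ^k) is bounded; in fact ‖ξ^k − ξ*‖_H ≤ ‖ξ^0 − ξ*‖_H + μ Σ_{j=0}^∞ ‖V^j‖ for all k, where μ = λ_min(H)^{−1/2} + λ_min(D)^{−1/2}. -/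

import Mathlib

/-!
Monotonicity of `Φ`, tested at `ξ̂ᵏ` against the zero `ξ*`, turns the correction step into the
inexact contraction
`‖ξᵏ⁺¹ - ξ*‖²_H ≤ ‖ξᵏ - ξ*‖²_H - ‖ξᵏ - ξ̂ᵏ‖²_D + 2 ⟨ξ̂ᵏ - ξ*, Vᵏ⟩`.
Bounding the error term by Cauchy–Schwarz and `‖y‖ ≤ λ_min(A)^{-1/2} ‖y‖_A` and completing the
square gives `‖ξᵏ⁺¹ - ξ*‖_H ≤ ‖ξᵏ - ξ*‖_H + μ ‖Vᵏ‖`, which telescopes against the summable errors.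
-/

open Matrix Unitary

lemma Real.sqrt_le_sqrt_add_of_le {s A B α β v : ℝ} (hA : 0 ≤ A) (hB : 0 ≤ B) (hα : 0 ≤ α)
    (hβ : 0 ≤ β) (hv : 0 ≤ v) (hs : s ≤ A - B + 2 * (α * √A * v) + 2 * (β * √B * v)) :
    √s ≤ √A + (α + β) * v := by
  have ha := Real.sqrt_nonneg A
  rw [Real.sqrt_le_left (by positivity)]
  nlinarith [Real.sq_sqrt hA, Real.sq_sqrt hB, sq_nonneg (√B - β * v),
    mul_nonneg ha (mul_nonneg hβ hv), mul_nonneg (mul_nonneg hα hv) (mul_nonneg hβ hv),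
    mul_nonneg (mul_nonneg hα hv) (mul_nonneg hα hv)]

lemma le_add_tsum_of_le_add {f u : ℕ → ℝ} (hu : ∀ k, 0 ≤ u k) (hsum : Summable u)
    (hstep : ∀ k, f (k + 1) ≤ f k + u k) (k : ℕ) : f k ≤ f 0 + ∑' j, u j := by
  have htel : f k - f 0 ≤ ∑ j ∈ Finset.range k, u j := by
    rw [← Finset.sum_range_sub]
    exact Finset.sum_le_sum fun j _ => sub_le_iff_le_add'.2 (hstep j)
  linarith [hsum.sum_le_tsum (Finset.range k) fun j _ => hu j]

variable {n : Type*} [Fintype n]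

lemma sqrt_dotProduct_self_eq_norm_toLp (x : n → ℝ) : √(x ⬝ᵥ x) = ‖WithLp.toLp 2 x‖ := by
  simp [EuclideanSpace.norm_eq, dotProduct, sq]

lemma dotProduct_le_sqrt_mul_sqrt (x y : n → ℝ) : x ⬝ᵥ y ≤ √(x ⬝ᵥ x) * √(y ⬝ᵥ y) := by
  simpa [sqrt_dotProduct_self_eq_norm_toLp, EuclideanSpace.inner_toLp_toLp, dotProduct_comm] using
    real_inner_le_norm (WithLp.toLp 2 x) (WithLp.toLp 2 y)

lemma norm_le_sqrt_dotProduct_self (x : n → ℝ) : ‖x‖ ≤ √(x ⬝ᵥ x) := by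
  rw [sqrt_dotProduct_self_eq_norm_toLp]
  exact pi_norm_le_iff_of_nonneg (norm_nonneg _) |>.2 (PiLp.norm_apply_le (WithLp.toLp 2 x))

namespace Matrix

lemma PosDef.dotProduct_mulVec_self_nonneg {A : Matrix n n ℝ} (hA : A.PosDef) (x : n → ℝ) :
    0 ≤ x ⬝ᵥ A *ᵥ x := by
  simpa using hA.posSemidef.dotProduct_mulVec_nonneg x

lemma IsHermitian.posSemidef_sub_smul_one [DecidableEq n] {A : Matrix n n ℝ} (hA : A.IsHermitian)
    {c : ℝ} (hc : ∀ i, c ≤ hA.eigenvalues i) : (A - c • 1).PosSemidef := by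
  have hdiag : A - c • 1 =
      conjStarAlgAut ℝ _ hA.eigenvectorUnitary (diagonal fun i => hA.eigenvalues i - c) := by
    conv_lhs => rw [hA.spectral_theorem, ← map_one (conjStarAlgAut ℝ _ hA.eigenvectorUnitary),
      ← map_smul, ← map_sub]
    rw [smul_one_eq_diagonal, diagonal_sub]
    rfl
  rw [hdiag, conjStarAlgAut_apply, isUnit_coe.posSemidef_star_right_conjugate_iff,
    posSemidef_diagonal_iff]
  exact fun i => sub_nonneg.mpr (hc i)

lemma IsHermitian.iInf_eigenvalues_mul_dotProduct_self_le [DecidableEq n] {A : Matrix n n ℝ}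
    (hA : A.IsHermitian) (x : n → ℝ) : (⨅ i, hA.eigenvalues i) * (x ⬝ᵥ x) ≤ x ⬝ᵥ A *ᵥ x := by
  have := (hA.posSemidef_sub_smul_one fun i => ciInf_le (Finite.bddBelow_range _) i)
    |>.dotProduct_mulVec_nonneg x
  simpa [sub_mulVec, dotProduct_sub, smul_mulVec, dotProduct_smul] using this

lemma PosDef.sqrt_dotProduct_self_le [DecidableEq n] {A : Matrix n n ℝ} (hA : A.PosDef)
    (x : n → ℝ) : √(x ⬝ᵥ x) ≤ (√(⨅ i, hA.1.eigenvalues i))⁻¹ * √(x ⬝ᵥ A *ᵥ x) := by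
  cases isEmpty_or_nonempty n
  · -- the infimum over no eigenvalues is the junk value `0`, but then `x ⬝ᵥ x = 0`
    simp [dotProduct]
  obtain ⟨i, hi⟩ := exists_eq_ciInf_of_finite (f := hA.1.eigenvalues)
  have hpos : 0 < ⨅ i, hA.1.eigenvalues i := hi ▸ hA.eigenvalues_pos i
  rw [le_inv_mul_iff₀ (Real.sqrt_pos.mpr hpos), ← Real.sqrt_mul hpos.le]
  exact Real.sqrt_le_sqrt (hA.1.iInf_eigenvalues_mul_dotProduct_self_le x)

lemma PosDef.dotProduct_le_mul_sqrt_mul_sqrt [DecidableEq n] {A : Matrix n n ℝ} (hA : A.PosDef)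
    (x y : n → ℝ) :
    x ⬝ᵥ y ≤ (√(⨅ i, hA.1.eigenvalues i))⁻¹ * √(x ⬝ᵥ A *ᵥ x) * √(y ⬝ᵥ y) :=
  (dotProduct_le_sqrt_mul_sqrt x y).trans
    (mul_le_mul_of_nonneg_right (hA.sqrt_dotProduct_self_le x) (Real.sqrt_nonneg _))

lemma dotProduct_sub_mulVec_mulVec_sub {H : Matrix n n ℝ} (hH : H.IsSymm) (M : Matrix n n ℝ)
    (x e : n → ℝ) :
    (x - M *ᵥ e) ⬝ᵥ H *ᵥ (x - M *ᵥ e) =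
      x ⬝ᵥ H *ᵥ x - e ⬝ᵥ ((H * M)ᵀ + H * M - Mᵀ * H * M) *ᵥ e -
        2 * ((x - e) ⬝ᵥ (H * M) *ᵥ e) := by
  have hcross : (M *ᵥ e) ⬝ᵥ H *ᵥ x = x ⬝ᵥ (H * M) *ᵥ e := by
    rw [dotProduct_mulVec, ← mulVec_transpose, hH.eq, mulVec_mulVec, dotProduct_comm]
  have htranspose : e ⬝ᵥ (H * M)ᵀ *ᵥ e = e ⬝ᵥ (H * M) *ᵥ e := by
    rw [mulVec_transpose, dotProduct_comm, ← dotProduct_mulVec]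
  have hMHM : e ⬝ᵥ (Mᵀ * H * M) *ᵥ e = (M *ᵥ e) ⬝ᵥ (H * M) *ᵥ e := by
    rw [mul_assoc, ← mulVec_mulVec, dotProduct_mulVec, vecMul_transpose]
  simp only [mulVec_sub, dotProduct_sub, sub_dotProduct, sub_mulVec, add_mulVec, dotProduct_add,
    hcross, htranspose, hMHM, mulVec_mulVec]
  ring

lemma PosDef.isBounded_range_of_sqrt_le [DecidableEq n] {ι : Type*} {A : Matrix n n ℝ}
    (hA : A.PosDef) {f : ι → n → ℝ} {c : n → ℝ} {R : ℝ}
    (hf : ∀ k, √((f k - c) ⬝ᵥ A *ᵥ (f k - c)) ≤ R) : Bornology.IsBounded (Set.range f) := by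
  refine (Metric.isBounded_closedBall (x := c) (r := (√(⨅ i, hA.1.eigenvalues i))⁻¹ * R)).subset ?_
  rintro _ ⟨k, rfl⟩
  rw [Metric.mem_closedBall, dist_eq_norm]
  calc ‖f k - c‖ ≤ √((f k - c) ⬝ᵥ (f k - c)) := norm_le_sqrt_dotProduct_self _
    _ ≤ (√(⨅ i, hA.1.eigenvalues i))⁻¹ * √((f k - c) ⬝ᵥ A *ᵥ (f k - c)) :=
      hA.sqrt_dotProduct_self_le _
    _ ≤ (√(⨅ i, hA.1.eigenvalues i))⁻¹ * R := by gcongr; exact hf k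

lemma PosDef.sqrt_dotProduct_sub_mulVec_le [DecidableEq n] {H M Q : Matrix n n ℝ}
    (hH : H.PosDef) (hQ : H * M = Q) (hD : (Qᵀ + Q - Mᵀ * H * M).PosDef) {x e w : n → ℝ}
    (hmon : 0 ≤ (x - e) ⬝ᵥ (Q *ᵥ e + w)) :
    √((x - M *ᵥ e) ⬝ᵥ H *ᵥ (x - M *ᵥ e)) ≤
      √(x ⬝ᵥ H *ᵥ x) +
        ((√(⨅ i, hH.1.eigenvalues i))⁻¹ + (√(⨅ i, hD.1.eigenvalues i))⁻¹) * √(w ⬝ᵥ w) := by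
  subst hQ
  have hxw := hH.dotProduct_le_mul_sqrt_mul_sqrt x w
  have hew := hD.dotProduct_le_mul_sqrt_mul_sqrt (-e) w
  simp only [neg_dotProduct, mulVec_neg, dotProduct_neg, neg_neg] at hew
  rw [dotProduct_add, sub_dotProduct x e w] at hmon
  refine Real.sqrt_le_sqrt_add_of_le (hH.dotProduct_mulVec_self_nonneg x)
    (hD.dotProduct_mulVec_self_nonneg e) (by positivity) (by positivity) (by positivity) ?_
  rw [dotProduct_sub_mulVec_mulVec_sub (isHermitian_iff_isSymm.mp hH.1)]
  linarith

end Matrix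

/-- Boundedness of the inexact prediction–correction sequence: with summable
error norms, `‖ξ^k − ξ*‖_H ≤ ‖ξ^0 − ξ*‖_H + μ Σ_j ‖V^j‖` for all `k`, where
`μ = λ_min(H)^{-1/2} + λ_min(D)^{-1/2}`; in particular the sequence is bounded. -/
theorem stmt7 {N : ℕ} (Φ : (Fin N → ℝ) → Set (Fin N → ℝ))
    (hmono : ∀ u v p q, p ∈ Φ u → q ∈ Φ v → 0 ≤ (u - v) ⬝ᵥ (p - q))
    (Q M : Matrix (Fin N) (Fin N) ℝ) (hM : IsUnit M.det)
    (hH : (Q * M⁻¹).PosDef)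
    (hD : (Qᵀ + Q - Mᵀ * (Q * M⁻¹) * M).PosDef)
    (ξ ξhat V : ℕ → Fin N → ℝ)
    (hincl : ∀ k, Q.mulVec (ξ k - ξhat k) + V k ∈ Φ (ξhat k))
    (hiter : ∀ k, ξ (k + 1) = ξ k - M.mulVec (ξ k - ξhat k))
    (hsum : Summable (fun k => Real.sqrt (V k ⬝ᵥ V k)))
    (ξstar : Fin N → ℝ) (hstar : (0 : Fin N → ℝ) ∈ Φ ξstar) :
    Bornology.IsBounded (Set.range ξ) ∧
      ∀ k, Real.sqrt ((ξ k - ξstar) ⬝ᵥ (Q * M⁻¹).mulVec (ξ k - ξstar)) ≤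
        Real.sqrt ((ξ 0 - ξstar) ⬝ᵥ (Q * M⁻¹).mulVec (ξ 0 - ξstar)) +
          ((Real.sqrt (⨅ i, hH.1.eigenvalues i))⁻¹ +
            (Real.sqrt (⨅ i, hD.1.eigenvalues i))⁻¹) *
            (∑' j, Real.sqrt (V j ⬝ᵥ V j)) := by
  set μ := (√(⨅ i, hH.1.eigenvalues i))⁻¹ + (√(⨅ i, hD.1.eigenvalues i))⁻¹
  have hQ : Q * M⁻¹ * M = Q := nonsing_inv_mul_cancel_right M Q hM
  have hstep (k : ℕ) :
      √((ξ (k + 1) - ξstar) ⬝ᵥ (Q * M⁻¹) *ᵥ (ξ (k + 1) - ξstar)) ≤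
        √((ξ k - ξstar) ⬝ᵥ (Q * M⁻¹) *ᵥ (ξ k - ξstar)) + μ * √(V k ⬝ᵥ V k) := by
    have hmon := hmono _ _ _ _ (hincl k) hstar
    rw [sub_zero, show ξhat k - ξstar = (ξ k - ξstar) - (ξ k - ξhat k) by abel] at hmon
    rw [hiter k, sub_right_comm]
    exact hH.sqrt_dotProduct_sub_mulVec_le hQ hD hmon
  have hbound := le_add_tsum_of_le_add (fun j => by positivity) (hsum.mul_left μ)
    (f := fun k => √((ξ k - ξstar) ⬝ᵥ (Q * M⁻¹) *ᵥ (ξ k - ξstar))) hstep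
  simp only [tsum_mul_left] at hbound
  exact ⟨hH.isBounded_range_of_sqrt_le hbound, hbound⟩
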